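/- arXiv:quant-ph/0301078 — 4 statements merged into one kernel-verified Lean document; each statement's English description precedes it below -/
import Mathlib

section
/- Every unitary error basis in dimension 2 is equivalent to the Pauli basis: given any set of four pairwise trace-orthogonal unitary 2×2 matrices {A₁,A₂,A₃,A₄}, there exist unitary matrices A, B ∈ U(2) and unit-modulus scalars c₁,...,c₄ such that {cⱼ A Aⱼ B} equals the set of Pauli matrices. -/
/-!
Left multiplication by `(A 0)⁻¹` reduces to a family containing `1`, whose other members are then
traceless unitaries. A traceless unitary `N` satisfies `N * N = -det N • 1`, so `k⁻¹ • N` with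
`k ^ 2 = -det N` is a Hermitian involution of trace zero, i.e. has eigenvalues `1, -1`; one
unitary conjugation therefore turns the second member into a multiple of `Z = pauli 2`.
Orthogonality to `1` and `Z` forces the remaining members to be antidiagonal with unimodular
entries `q, r`. Conjugating by `diag(1, e)` replaces `q, r` by `q * conj e, r * e`, which agree
when `e ^ 2 = q * conj r`; this makes the third member a multiple of `X = pauli 1`, and
orthogonality to `1, Z, X` leaves for the fourth only multiples of `Y = pauli 3`.
-/

open Matrix Complex

/-- The four Pauli matrices. -/
noncomputable def pauli : Fin 4 → Matrix (Fin 2) (Fin 2) ℂ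
  | 0 => !![1, 0; 0, 1]
  | 1 => !![0, 1; 1, 0]
  | 2 => !![1, 0; 0, -1]
  | 3 => !![0, -Complex.I; Complex.I, 0]

open ComplexConjugate

lemma Complex.mem_unitary_of_norm_eq_one {z : ℂ} (hz : ‖z‖ = 1) : z ∈ unitary ℂ :=
  Unitary.mem_iff.mpr ⟨by simp [Complex.conj_mul', hz], by simp [Complex.mul_conj', hz]⟩

section

variable {ι n : Type*} [Fintype n] [DecidableEq n]

lemma trace_conjTranspose_mul_sandwich {U V : Matrix n n ℂ} (hU : U ∈ unitaryGroup n ℂ)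
    (hV : V ∈ unitaryGroup n ℂ) (M N : Matrix n n ℂ) :
    trace ((U * M * V)ᴴ * (U * N * V)) = trace (Mᴴ * N) := by
  have hUU : Uᴴ * U = 1 := mem_unitaryGroup_iff'.mp hU
  have hVV : V * Vᴴ = 1 := mem_unitaryGroup_iff.mp hV
  calc trace ((U * M * V)ᴴ * (U * N * V)) = trace (Vᴴ * (Mᴴ * (Uᴴ * U) * N) * V) := by
        simp only [conjTranspose_mul, Matrix.mul_assoc]
    _ = trace (Mᴴ * N) := by rw [trace_mul_cycle, hUU, hVV, Matrix.mul_one, Matrix.one_mul]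

lemma diagonal_mem_unitaryGroup {d : n → ℂ} (hd : ∀ i, ‖d i‖ = 1) :
    diagonal d ∈ unitaryGroup n ℂ := by
  rw [mem_unitaryGroup_iff, star_eq_conjTranspose, diagonal_conjTranspose, diagonal_mul_diagonal,
    ← diagonal_one]
  congr 1
  ext i
  simp [Complex.mul_conj', hd i]

lemma isHermitian_of_mem_unitaryGroup_of_mul_self_eq_one {H : Matrix n n ℂ}
    (hH : H ∈ unitaryGroup n ℂ) (hsq : H * H = 1) : H.IsHermitian :=
  calc Hᴴ = star H * (H * H) := by rw [hsq, Matrix.mul_one, star_eq_conjTranspose]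
    _ = H := by rw [← Matrix.mul_assoc, mem_unitaryGroup_iff'.mp hH, Matrix.one_mul]

def IsOrthogonalUnitaryFamily (A : ι → Matrix n n ℂ) : Prop :=
  (∀ i, A i ∈ unitaryGroup n ℂ) ∧ ∀ i j, i ≠ j → trace ((A i)ᴴ * A j) = 0

namespace IsOrthogonalUnitaryFamily

variable {A : ι → Matrix n n ℂ}

lemma sandwich (hA : IsOrthogonalUnitaryFamily A) {U V : Matrix n n ℂ}
    (hU : U ∈ unitaryGroup n ℂ) (hV : V ∈ unitaryGroup n ℂ) :
    IsOrthogonalUnitaryFamily fun i => U * A i * V :=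
  ⟨fun i => mul_mem (mul_mem hU (hA.1 i)) hV, fun i j hij => by
    rw [trace_conjTranspose_mul_sandwich hU hV, hA.2 i j hij]⟩

lemma trace_conjTranspose_mul_eq_zero_of_eq_smul (hA : IsOrthogonalUnitaryFamily A) {i j : ι}
    (hij : i ≠ j) {l : ℂ} (hl : l ≠ 0) {P : Matrix n n ℂ} (hP : A i = l • P) :
    trace (Pᴴ * A j) = 0 := by
  have := hA.2 i j hij
  rw [hP, conjTranspose_smul, Matrix.smul_mul, trace_smul, smul_eq_mul] at this
  exact (mul_eq_zero.mp this).resolve_left (star_ne_zero.mpr hl)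

end IsOrthogonalUnitaryFamily

end

lemma pauli_zero : pauli 0 = 1 := by
  ext i j; fin_cases i <;> fin_cases j <;> rfl

lemma pauli_two_eq_diagonal : pauli 2 = diagonal ![1, -1] := by
  ext i j; fin_cases i <;> fin_cases j <;> rfl

lemma mul_self_eq_neg_det_smul_one_of_trace_eq_zero {R : Type*} [CommRing R]
    {M : Matrix (Fin 2) (Fin 2) R} (h : M.trace = 0) : M * M = -M.det • (1 : Matrix _ _ R) := by
  rw [trace_fin_two] at h
  ext i j; fin_cases i <;> fin_cases j <;> simp [mul_apply, det_fin_two] <;> grind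

lemma Matrix.IsHermitian.exists_unitary_conj_eq_smul_pauli_two {H : Matrix (Fin 2) (Fin 2) ℂ}
    (hH : H.IsHermitian) (hsq : H * H = 1) (htr : H.trace = 0) :
    ∃ W ∈ unitaryGroup (Fin 2) ℂ, ∃ μ : ℝ, μ ^ 2 = 1 ∧ star W * H * W = (μ : ℂ) • pauli 2 := by
  set W : Matrix (Fin 2) (Fin 2) ℂ := (hH.eigenvectorUnitary : Matrix (Fin 2) (Fin 2) ℂ)
  have hW : W ∈ unitaryGroup (Fin 2) ℂ := hH.eigenvectorUnitary.2
  set μ := hH.eigenvalues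
  have hdiag : star W * H * W = diagonal (fun i => (μ i : ℂ)) := by
    simpa [Function.comp_def] using hH.conjStarAlgAut_star_eigenvectorUnitary
  have hsq' : diagonal (fun i => (μ i : ℂ)) * diagonal (fun i => (μ i : ℂ)) = 1 := by
    rw [← hdiag]
    calc star W * H * W * (star W * H * W) = star W * (H * (W * star W) * H) * W := by
          simp only [Matrix.mul_assoc]
      _ = 1 := by rw [mem_unitaryGroup_iff.mp hW, Matrix.mul_one, hsq, Matrix.mul_one,
            mem_unitaryGroup_iff'.mp hW]
  have htr' : trace (diagonal (fun i => (μ i : ℂ))) = 0 := by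
    rw [← hdiag, trace_mul_cycle, mem_unitaryGroup_iff.mp hW, Matrix.one_mul, htr]
  rw [diagonal_mul_diagonal, ← diagonal_one, diagonal_eq_diagonal_iff] at hsq'
  rw [trace_diagonal, Fin.sum_univ_two] at htr'
  have hμ0 : μ 0 ^ 2 = 1 := by exact_mod_cast (sq (μ 0 : ℂ)).trans (hsq' 0)
  have hμ1 : μ 1 = - μ 0 := by
    have : (μ 0 : ℂ) + μ 1 = 0 := by simpa using htr'
    exact_mod_cast (by linear_combination this : (μ 1 : ℂ) = - μ 0)
  refine ⟨W, hW, μ 0, hμ0, ?_⟩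
  rw [hdiag, pauli_two_eq_diagonal, ← diagonal_smul]
  congr 1
  ext i; fin_cases i <;> simp [hμ1]

lemma exists_unitary_conj_eq_smul_pauli_two {N : Matrix (Fin 2) (Fin 2) ℂ}
    (hN : N ∈ unitaryGroup (Fin 2) ℂ) (htr : N.trace = 0) :
    ∃ l : ℂ, ‖l‖ = 1 ∧ ∃ W ∈ unitaryGroup (Fin 2) ℂ, star W * N * W = l • pauli 2 := by
  obtain ⟨k, hk⟩ := IsAlgClosed.exists_eq_mul_self (-N.det)
  have hk1 : ‖k‖ = 1 := by
    have hdet : N.det ∈ unitary ℂ := det_of_mem_unitary hN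
    have h := CStarRing.norm_of_mem_unitary hdet
    rw [← norm_neg, hk, norm_mul] at h
    nlinarith [norm_nonneg k]
  have hk0 : k ≠ 0 := norm_ne_zero_iff.mp (hk1 ▸ one_ne_zero)
  have hH : k⁻¹ • N ∈ unitaryGroup (Fin 2) ℂ :=
    Unitary.smul_mem_of_mem
      (Complex.mem_unitary_of_norm_eq_one (by rw [norm_inv, hk1, inv_one])) hN
  have hsq : k⁻¹ • N * k⁻¹ • N = 1 := by
    rw [smul_mul_smul, mul_self_eq_neg_det_smul_one_of_trace_eq_zero htr, hk, smul_smul,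
      ← mul_inv, inv_mul_cancel₀ (mul_ne_zero hk0 hk0), one_smul]
  have htr' : (k⁻¹ • N).trace = 0 := by rw [trace_smul, htr, smul_zero]
  obtain ⟨W, hW, μ, hμ, hWH⟩ := (isHermitian_of_mem_unitaryGroup_of_mul_self_eq_one hH
    hsq).exists_unitary_conj_eq_smul_pauli_two hsq htr'
  refine ⟨k * μ, ?_, W, hW, ?_⟩
  · rw [norm_mul, hk1, one_mul, Complex.norm_real, Real.norm_eq_abs,
      ← pow_eq_one_iff_of_nonneg (abs_nonneg μ) two_ne_zero, sq_abs, hμ]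
  · rw [mul_smul, ← hWH, Matrix.mul_smul, Matrix.smul_mul, smul_smul, mul_inv_cancel₀ hk0,
      one_smul]

lemma exists_eq_antidiagonal_of_orthogonal {M : Matrix (Fin 2) (Fin 2) ℂ}
    (hM : M ∈ unitaryGroup (Fin 2) ℂ) (h0 : trace ((pauli 0)ᴴ * M) = 0)
    (h2 : trace ((pauli 2)ᴴ * M) = 0) :
    ∃ q r : ℂ, ‖q‖ = 1 ∧ ‖r‖ = 1 ∧ M = !![0, q; r, 0] := by
  replace h0 : M 0 0 + M 1 1 = 0 := by simpa [pauli_zero, trace_fin_two] using h0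
  replace h2 : M 0 0 - M 1 1 = 0 := by
    simpa [pauli_two_eq_diagonal, trace_fin_two, sub_eq_add_neg] using h2
  have hM' : M = !![0, M 0 1; M 1 0, 0] := by
    ext i j; fin_cases i <;> fin_cases j
    · simpa using (by linear_combination (h0 + h2) / 2 : M 0 0 = 0)
    · rfl
    · rfl
    · simpa using (by linear_combination (h0 - h2) / 2 : M 1 1 = 0)
  have hMM := mem_unitaryGroup_iff'.mp hM
  rw [hM'] at hMM
  have hentry (i : Fin 2) := congrFun₂ hMM i i
  refine ⟨M 0 1, M 1 0, ?_, ?_, hM'⟩ <;>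
  refine CStarRing.norm_of_mem_unitary (Unitary.mem_iff_star_mul_self.mpr ?_)
  · simpa [mul_apply] using hentry 1
  · simpa [mul_apply] using hentry 0

lemma exists_diagonal_conj_antidiagonal_eq_smul_pauli_one {q r : ℂ} (hq : ‖q‖ = 1)
    (hr : ‖r‖ = 1) : ∃ e : ℂ, ‖e‖ = 1 ∧ ∃ s : ℂ, ‖s‖ = 1 ∧
      diagonal ![1, e] * !![0, q; r, 0] * star (diagonal ![1, e]) = s • pauli 1 := by
  obtain ⟨e, he⟩ := IsAlgClosed.exists_eq_mul_self (q * conj r)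
  have he1 : ‖e‖ = 1 := by
    have h := congrArg norm he
    rw [norm_mul, norm_mul, Complex.norm_conj, hq, hr, one_mul] at h
    nlinarith [norm_nonneg e]
  have hrr : r * conj r = 1 := by simp [Complex.mul_conj', hr]
  have hee : e * conj e = 1 := by simp [Complex.mul_conj', he1]
  have hqe : q * conj e = r * e := by
    linear_combination (-(q * conj e)) * hrr + (conj e * r) * he + (r * e) * hee
  refine ⟨e, he1, r * e, by rw [norm_mul, hr, he1, one_mul], ?_⟩
  ext i j; fin_cases i <;> fin_cases j <;> simp [pauli, mul_apply, hqe, mul_comm]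

lemma exists_eq_smul_pauli_three_of_orthogonal {M : Matrix (Fin 2) (Fin 2) ℂ}
    (hM : M ∈ unitaryGroup (Fin 2) ℂ) (h0 : trace ((pauli 0)ᴴ * M) = 0)
    (h1 : trace ((pauli 1)ᴴ * M) = 0) (h2 : trace ((pauli 2)ᴴ * M) = 0) :
    ∃ t : ℂ, ‖t‖ = 1 ∧ M = t • pauli 3 := by
  obtain ⟨q, r, hq, -, rfl⟩ := exists_eq_antidiagonal_of_orthogonal hM h0 h2
  have hrq : r = -q := by
    simpa [pauli, trace_fin_two, mul_apply, eq_neg_iff_add_eq_zero] using h1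
  refine ⟨I * q, by rw [norm_mul, norm_I, hq, one_mul], ?_⟩
  have hIqI : I * q * I = -q := by linear_combination q * I_sq
  ext i j; fin_cases i <;> fin_cases j <;> simp [pauli, hrq, hIqI]

lemma IsOrthogonalUnitaryFamily.exists_conj_eq_smul_pauli_of_eq_smul_pauli_two
    {C : Fin 4 → Matrix (Fin 2) (Fin 2) ℂ} (hC : IsOrthogonalUnitaryFamily C) (hC0 : C 0 = 1)
    {l : ℂ} (hl : ‖l‖ = 1) (hC1 : C 1 = l • pauli 2) :
    ∃ D ∈ unitaryGroup (Fin 2) ℂ, ∃ d : Fin 4 → ℂ,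
      (∀ i, ‖d i‖ = 1) ∧ ∀ i, D * C i * star D = d i • pauli (Equiv.swap 1 2 i) := by
  have hl0 : l ≠ 0 := norm_ne_zero_iff.mp (hl ▸ one_ne_zero)
  replace hC0 : C 0 = (1 : ℂ) • pauli 0 := by rw [one_smul, pauli_zero, hC0]
  obtain ⟨q, r, hq, hr, hC2⟩ := exists_eq_antidiagonal_of_orthogonal (hC.1 2)
    (hC.trace_conjTranspose_mul_eq_zero_of_eq_smul (i := 0) (by decide) one_ne_zero hC0)
    (hC.trace_conjTranspose_mul_eq_zero_of_eq_smul (i := 1) (by decide) hl0 hC1)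
  obtain ⟨e, he, s, hs, hDX⟩ := exists_diagonal_conj_antidiagonal_eq_smul_pauli_one hq hr
  set D : Matrix (Fin 2) (Fin 2) ℂ := diagonal ![1, e] with hDdef
  have hD : D ∈ unitaryGroup (Fin 2) ℂ :=
    diagonal_mem_unitaryGroup (by simp [Fin.forall_fin_two, he])
  set P := fun i => D * C i * star D with hPdef
  have hP : IsOrthogonalUnitaryFamily P := hC.sandwich hD (Unitary.star_mem hD)
  have hP0 : P 0 = (1 : ℂ) • pauli 0 := by
    show D * C 0 * star D = _
    rw [hC0, one_smul, pauli_zero, Matrix.mul_one, mem_unitaryGroup_iff.mp hD]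
  have hP1 : P 1 = l • pauli 2 := by
    show D * C 1 * star D = _
    rw [hC1, Matrix.mul_smul, Matrix.smul_mul, pauli_two_eq_diagonal, hDdef,
      commute_diagonal, Matrix.mul_assoc, ← hDdef, mem_unitaryGroup_iff.mp hD, Matrix.mul_one]
  have hP2 : P 2 = s • pauli 1 := by
    show D * C 2 * star D = _
    rw [hC2, hDX]
  have hs0 : s ≠ 0 := norm_ne_zero_iff.mp (hs ▸ one_ne_zero)
  obtain ⟨t, ht, hP3⟩ := exists_eq_smul_pauli_three_of_orthogonal (hP.1 3)
    (hP.trace_conjTranspose_mul_eq_zero_of_eq_smul (i := 0) (by decide) one_ne_zero hP0)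
    (hP.trace_conjTranspose_mul_eq_zero_of_eq_smul (i := 2) (by decide) hs0 hP2)
    (hP.trace_conjTranspose_mul_eq_zero_of_eq_smul (i := 1) (by decide) hl0 hP1)
  refine ⟨D, hD, ![1, l, s, t], by simp [Fin.forall_fin_succ, hl, hs, ht], fun i => ?_⟩
  fin_cases i
  · simpa [Equiv.swap_apply_of_ne_of_ne] using hP0
  · simpa using hP1
  · simpa using hP2
  · simpa [Equiv.swap_apply_of_ne_of_ne] using hP3

lemma IsOrthogonalUnitaryFamily.exists_conj_eq_smul_pauli_of_eq_one
    {B : Fin 4 → Matrix (Fin 2) (Fin 2) ℂ} (hB : IsOrthogonalUnitaryFamily B) (hB0 : B 0 = 1) :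
    ∃ W ∈ unitaryGroup (Fin 2) ℂ, ∃ d : Fin 4 → ℂ,
      (∀ i, ‖d i‖ = 1) ∧ ∀ i, star W * B i * W = d i • pauli (Equiv.swap 1 2 i) := by
  obtain ⟨l, hl, V, hV, hVB⟩ := exists_unitary_conj_eq_smul_pauli_two (hB.1 1)
    (by simpa [hB0] using hB.2 0 1 (by decide))
  obtain ⟨D, hD, d, hd, hDVB⟩ := (hB.sandwich (Unitary.star_mem hV) hV)
    |>.exists_conj_eq_smul_pauli_of_eq_smul_pauli_two
      (by simp [hB0, mem_unitaryGroup_iff'.mp hV]) hl hVB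
  refine ⟨V * star D, mul_mem hV (Unitary.star_mem hD), d, hd, fun i => ?_⟩
  rw [← hDVB i, star_mul, star_star]
  simp only [Matrix.mul_assoc]

/-- Every unitary error basis in dimension 2 is equivalent to the
Pauli basis. -/
theorem ueb_dim_two_equiv_pauli (A : Fin 4 → Matrix (Fin 2) (Fin 2) ℂ)
    (hU : ∀ i, A i ∈ Matrix.unitaryGroup (Fin 2) ℂ)
    (horth : ∀ i j, i ≠ j → Matrix.trace ((A i)ᴴ * A j) = 0) :
    ∃ U ∈ Matrix.unitaryGroup (Fin 2) ℂ, ∃ V ∈ Matrix.unitaryGroup (Fin 2) ℂ,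
      ∃ c : Fin 4 → ℂ, (∀ i, ‖c i‖ = 1) ∧
        (Set.range fun i => c i • (U * A i * V)) = Set.range pauli := by
  have hB : IsOrthogonalUnitaryFamily fun i => star (A 0) * A i * 1 :=
    IsOrthogonalUnitaryFamily.sandwich ⟨hU, horth⟩ (Unitary.star_mem (hU 0)) (one_mem _)
  obtain ⟨W, hW, d, hd, hWB⟩ :=
    hB.exists_conj_eq_smul_pauli_of_eq_one (by simp [mem_unitaryGroup_iff'.mp (hU 0)])
  simp only [Matrix.mul_one, ← Matrix.mul_assoc] at hWB
  refine ⟨star W * star (A 0), mul_mem (Unitary.star_mem hW) (Unitary.star_mem (hU 0)), W, hW,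
    fun i => (d i)⁻¹, by simp [hd], ?_⟩
  have hpauli :
      (fun i => (d i)⁻¹ • (star W * star (A 0) * A i * W)) = pauli ∘ Equiv.swap 1 2 := by
    funext i
    have hdi : d i ≠ 0 := norm_ne_zero_iff.mp (hd i ▸ one_ne_zero)
    rw [hWB, smul_smul, inv_mul_cancel₀ hdi, one_smul, Function.comp_apply]
  rw [hpauli, (Equiv.swap 1 2).surjective.range_comp]
end

section
/- Every shift-and-multiply basis is a unitary error basis: given a Latin square L of order d and complex Hadamard matrices H⁽⁰⁾,...,H⁽ᵈ⁻¹⁾ of order d, the d² matrices E_{ij} defined by E_{ij}|k⟩ = H⁽ʲ⁾_{ik} |L(j,k)⟩ are unitary and satisfy tr(E_{ij}† E_{kl}) = 0 whenever (i,j) ≠ (k,l). -/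
open Matrix

/-- every shift-and-multiply basis (built from a Latin square `L`
and complex Hadamard matrices `H⁽ʲ⁾`) is a unitary error basis. -/
theorem shift_and_multiply_is_ueb (d : ℕ)
    (L : Fin d → Fin d → Fin d)
    (hrow : ∀ j, Function.Bijective (L j))
    (hcol : ∀ k, Function.Bijective fun j => L j k)
    (H : Fin d → Matrix (Fin d) (Fin d) ℂ)
    (hmod : ∀ j i k, ‖H j i k‖ = 1)
    (hHad : ∀ j, (H j)ᴴ * H j = (d : ℂ) • (1 : Matrix (Fin d) (Fin d) ℂ)) :
    let E : Fin d → Fin d → Matrix (Fin d) (Fin d) ℂ :=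
      fun i j => Matrix.of fun a k => if a = L j k then H j i k else 0
    (∀ i j, E i j ∈ Matrix.unitaryGroup (Fin d) ℂ) ∧
    (∀ i j k l, (i, j) ≠ (k, l) → Matrix.trace ((E i j)ᴴ * E k l) = 0) := by
  intro E
  -- H j * (H j)ᴴ = d • 1
  have hd : ∀ j, H j * (H j)ᴴ = (d : ℂ) • (1 : Matrix (Fin d) (Fin d) ℂ) := by
    intro j
    rcases Nat.eq_zero_or_pos d with h0 | hpos
    · subst h0
      apply Subsingleton.elim
    · have hdne : (d : ℂ) ≠ 0 := Nat.cast_ne_zero.mpr hpos.ne'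
      have h1 : ((d : ℂ)⁻¹ • (H j)ᴴ) * H j = 1 := by
        rw [Matrix.smul_mul, hHad, smul_smul, inv_mul_cancel₀ hdne, one_smul]
      have h2 := mul_eq_one_comm.mp h1
      rw [Matrix.mul_smul] at h2
      calc H j * (H j)ᴴ = (d : ℂ) • ((d : ℂ)⁻¹ • (H j * (H j)ᴴ)) := by
            rw [smul_smul, mul_inv_cancel₀ hdne, one_smul]
        _ = (d : ℂ) • 1 := by rw [h2]
  have hEapp : ∀ i j k l b b', ((E i j)ᴴ * E k l) b b' =
      if L j b = L l b' then (starRingEnd ℂ) (H j i b) * H l k b' else 0 := by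
    intro i j k l b b'
    simp only [E, Matrix.mul_apply, Matrix.conjTranspose_apply, Matrix.of_apply,
      ite_mul, mul_ite, zero_mul, mul_zero]
    rw [Finset.sum_ite_eq' Finset.univ (L l b')]
    simp [apply_ite star, ite_mul, eq_comm]
  constructor
  · intro i j
    rw [Matrix.mem_unitaryGroup_iff']
    ext b b'
    rw [show (star (E i j) : Matrix (Fin d) (Fin d) ℂ) = (E i j)ᴴ from rfl, hEapp]
    simp only [(hrow j).injective.eq_iff]
    by_cases h : b = b'
    · subst h
      simp only [if_pos rfl, Matrix.one_apply_eq]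
      rw [Complex.conj_mul', ← Complex.ofReal_pow, hmod]
      norm_num
    · simp [h, Matrix.one_apply_ne h]
  · intro i j k l hne
    rw [Matrix.trace]
    simp only [Matrix.diag_apply]
    by_cases hjl : j = l
    · subst hjl
      have hik : i ≠ k := by
        intro h; exact hne (by rw [h])
      have hsum : ∀ b, ((E i j)ᴴ * E k j) b b = H j k b * (starRingEnd ℂ) (H j i b) := by
        intro b
        rw [hEapp]
        rw [if_pos rfl, mul_comm]
      calc (∑ b, ((E i j)ᴴ * E k j) b b) = ∑ b, H j k b * (starRingEnd ℂ) (H j i b) := by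
            exact Finset.sum_congr rfl fun b _ => hsum b
        _ = (H j * (H j)ᴴ) k i := by
            rw [Matrix.mul_apply]
            exact Finset.sum_congr rfl fun b _ => by rw [Matrix.conjTranspose_apply]; rfl
        _ = 0 := by rw [hd j, Matrix.smul_apply, Matrix.one_apply_ne (Ne.symm hik), smul_zero]
    · have : ∀ b, ((E i j)ᴴ * E k l) b b = 0 := by
        intro b
        rw [hEapp, if_neg]
        exact fun h => hjl ((hcol b).injective h)
      simp [this]
end

section
/- Let r and p be odd primes with r dividing p+1. Then SL(2,𝔽_p) contains an element of order r, and every element of order r in SL(2,𝔽_p) acts irreducibly on 𝔽_p × 𝔽_p: the only subspaces invariant under such a matrix are {0} and the whole space. -/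
/-!
A reducible element `g` of `SL(2, 𝔽_p)` fixes a line `𝔽_p v`, with eigenvalue `c ≠ 0`. Then
`g ^ (p - 1)` fixes `v` and has determinant `1`, so both of its eigenvalues are `1`; by
Cayley–Hamilton `g ^ (p - 1) - 1` squares to zero, and the Frobenius identity
`(x - 1) ^ p = x ^ p - 1` gives `g ^ ((p - 1) * p) = 1`. An odd prime `r ∣ p + 1` divides neither
`p` nor `p - 1`, so `g` cannot have order `r`. Elements of order `r` exist by Cauchy's theorem,
since `r` divides `|GL(2, 𝔽_p)| = |SL(2, 𝔽_p)| (p - 1)` and not `p - 1`.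
-/

open Matrix

lemma Nat.not_dvd_of_dvd_add_one {p r : ℕ} (hr : 1 < r) (h : r ∣ p + 1) : ¬ r ∣ p := fun hp ↦
  Nat.not_dvd_of_pos_of_lt one_pos hr ((Nat.dvd_add_right hp).mp h)

lemma Nat.not_dvd_sub_one_of_dvd_add_one {p r : ℕ} (hr : 1 < r) (hodd : Odd r) (h : r ∣ p + 1) :
    ¬ r ∣ p - 1 := by
  intro hsub
  rcases p.eq_zero_or_pos with rfl | hp
  · exact Nat.not_dvd_of_pos_of_lt one_pos hr h
  · have htwo : r ∣ 2 := by
      have := Nat.dvd_sub h hsub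
      rwa [show p + 1 - (p - 1) = 2 by omega] at this
    have := Nat.le_of_dvd two_pos htwo
    obtain ⟨k, rfl⟩ := hodd
    omega

lemma Matrix.sq_sub_one_eq_zero_of_det_eq_one {R : Type*} [CommRing R]
    {A : Matrix (Fin 2) (Fin 2) R} (hdet : A.det = 1) (hdet_sub : (A - 1).det = 0) :
    (A - 1) ^ 2 = 0 := by
  rw [det_fin_two] at hdet hdet_sub
  simp only [sub_apply, one_fin_two, of_apply, cons_val', cons_val_zero, cons_val_one,
    empty_val', cons_val_fin_one] at hdet_sub
  have htrace : A 0 0 + A 1 1 = 2 := by linear_combination hdet - hdet_sub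
  ext i j
  fin_cases i <;> fin_cases j <;>
    simp only [one_fin_two, Fin.zero_eta, Fin.mk_one, Fin.isValue, sq, mul_apply, sub_apply,
      of_apply, cons_val', cons_val_fin_one, cons_val_zero, cons_val_one, Fin.sum_univ_two,
      sub_zero, zero_apply]
  · linear_combination A 0 0 * htrace - hdet
  · linear_combination A 0 1 * htrace
  · linear_combination A 1 0 * htrace
  · linear_combination A 1 1 * htrace - hdet

lemma pow_char_eq_one_of_sq_sub_one_eq_zero {R : Type*} [Ring R] (p : ℕ) [Fact p.Prime]
    [CharP R p] {x : R} (hx : (x - 1) ^ 2 = 0) : x ^ p = 1 := by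
  have : (x - 1) ^ p = 0 := pow_eq_zero_of_le (Fact.out : p.Prime).two_le hx
  rwa [sub_pow_char_of_commute p (Commute.one_right x), one_pow, sub_eq_zero] at this

lemma Matrix.card_specialLinearGroup_mul_card_units {n R : Type*} [Fintype n] [DecidableEq n]
    [Nonempty n] [CommRing R] :
    Nat.card (SpecialLinearGroup n R) * Nat.card Rˣ = Nat.card (GL n R) := by
  have hker : (GeneralLinearGroup.det : GL n R →* Rˣ).ker = SpecialLinearGroup.toGL.range := by
    ext x
    simpa using (Set.ext_iff.mp SpecialLinearGroup.range_toGL x).symm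
  rw [← Subgroup.card_mul_index GeneralLinearGroup.det.ker, Subgroup.index_ker,
    MonoidHom.range_eq_top.mpr GeneralLinearGroup.det_surjective, Subgroup.card_top, hker,
    Nat.card_congr (MonoidHom.ofInjective SpecialLinearGroup.toGL_injective).toEquiv]

lemma Matrix.exists_mulVec_eq_smul_of_invariant {K : Type*} [Field K]
    {A : Matrix (Fin 2) (Fin 2) K} {W : Submodule K (Fin 2 → K)} (hW : ∀ v ∈ W, A *ᵥ v ∈ W)
    (hbot : W ≠ ⊥) (htop : W ≠ ⊤) : ∃ v ≠ 0, ∃ c : K, A *ᵥ v = c • v := by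
  obtain ⟨v, hvW, hv⟩ := (Submodule.ne_bot_iff W).mp hbot
  have hfinrank : Module.finrank K W < 2 := by
    simpa using Submodule.finrank_lt htop
  have hW_eq : K ∙ v = W := by
    refine Submodule.eq_of_le_of_finrank_le ((Submodule.span_singleton_le_iff_mem v W).mpr hvW) ?_
    rw [finrank_span_singleton hv]
    omega
  obtain ⟨c, hc⟩ := Submodule.mem_span_singleton.mp (hW_eq ▸ hW v hvW)
  exact ⟨v, hv, c, hc.symm⟩

lemma Matrix.pow_mulVec_of_mulVec_eq_smul {R n : Type*} [CommRing R] [Fintype n] [DecidableEq n]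
    {A : Matrix n n R} {v : n → R} {c : R} (h : A *ᵥ v = c • v) (k : ℕ) :
    A ^ k *ᵥ v = c ^ k • v := by
  induction k with
  | zero => simp
  | succ k ih => rw [pow_succ', ← mulVec_mulVec, ih, mulVec_smul, h, smul_smul, pow_succ]

lemma Matrix.pow_eq_one_of_mulVec_eq_smul {K : Type*} [Field K] [Fintype K] (p : ℕ)
    [Fact p.Prime] [CharP K p] {A : Matrix (Fin 2) (Fin 2) K} (hdet : A.det = 1)
    {v : Fin 2 → K} (hv : v ≠ 0) {c : K} (hAv : A *ᵥ v = c • v) :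
    A ^ ((Fintype.card K - 1) * p) = 1 := by
  have hc : c ≠ 0 := by
    rintro rfl
    have : A.det = 0 := exists_mulVec_eq_zero_iff.mp ⟨v, hv, by rw [hAv, zero_smul]⟩
    exact one_ne_zero (hdet.symm.trans this)
  have hfixed : A ^ (Fintype.card K - 1) *ᵥ v = v := by
    rw [pow_mulVec_of_mulVec_eq_smul hAv, FiniteField.pow_card_sub_one_eq_one c hc, one_smul]
  have hdet_sub : (A ^ (Fintype.card K - 1) - 1).det = 0 :=
    exists_mulVec_eq_zero_iff.mp ⟨v, hv, by rw [sub_mulVec, hfixed, one_mulVec, sub_self]⟩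
  rw [pow_mul]
  exact pow_char_eq_one_of_sq_sub_one_eq_zero p
    (sq_sub_one_eq_zero_of_det_eq_one (by rw [det_pow, hdet, one_pow]) hdet_sub)

theorem sl2_order_r_acts_irreducibly_general (p r : ℕ) [Fact p.Prime] (hr : r.Prime)
    (hrodd : Odd r) (hdvd : r ∣ p + 1) :
    (∃ g : Matrix.SpecialLinearGroup (Fin 2) (ZMod p), orderOf g = r) ∧
    (∀ g : Matrix.SpecialLinearGroup (Fin 2) (ZMod p), orderOf g = r →
      ∀ W : Submodule (ZMod p) (Fin 2 → ZMod p),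
        (∀ v ∈ W, (g : Matrix (Fin 2) (Fin 2) (ZMod p)).mulVec v ∈ W) →
        W = ⊥ ∨ W = ⊤) := by
  have : Fact r.Prime := ⟨hr⟩
  have hr_p : ¬ r ∣ p := Nat.not_dvd_of_dvd_add_one hr.one_lt hdvd
  have hr_p_sub : ¬ r ∣ p - 1 := Nat.not_dvd_sub_one_of_dvd_add_one hr.one_lt hrodd hdvd
  constructor
  · have hGL : r ∣ Nat.card (GL (Fin 2) (ZMod p)) := by
      rw [card_GL_field]
      simp only [ZMod.card, Fin.prod_univ_two, Fin.isValue, Fin.coe_ofNat_eq_mod, Nat.zero_mod,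
        pow_zero, Nat.mod_succ, pow_one]
      exact dvd_mul_of_dvd_left (hdvd.trans ⟨p - 1, by simpa using Nat.sq_sub_sq p 1⟩) _
    rw [← card_specialLinearGroup_mul_card_units, Nat.card_eq_fintype_card (α := (ZMod p)ˣ),
      ZMod.card_units] at hGL
    exact exists_prime_orderOf_dvd_card' r ((hr.dvd_mul.mp hGL).resolve_right hr_p_sub)
  · intro g hg W hW
    by_contra! hW_proper
    obtain ⟨v, hv, c, hc⟩ := exists_mulVec_eq_smul_of_invariant hW hW_proper.1 hW_proper.2
    have hpow : g ^ ((p - 1) * p) = 1 := Subtype.ext <| by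
      simpa [ZMod.card] using pow_eq_one_of_mulVec_eq_smul p g.2 hv hc
    have := hg ▸ orderOf_dvd_of_pow_eq_one hpow
    exact (hr.dvd_mul.mp this).elim hr_p_sub hr_p

/-- for odd primes `r ∣ p + 1`, `SL(2,𝔽_p)` contains an element
of order `r`, and every element of order `r` acts irreducibly on `𝔽_p²`. -/
theorem sl2_order_r_acts_irreducibly (p r : ℕ) [Fact p.Prime] (hr : r.Prime)
    (hpodd : Odd p) (hrodd : Odd r) (hdvd : r ∣ p + 1) :
    (∃ g : Matrix.SpecialLinearGroup (Fin 2) (ZMod p), orderOf g = r) ∧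
    (∀ g : Matrix.SpecialLinearGroup (Fin 2) (ZMod p), orderOf g = r →
      ∀ W : Submodule (ZMod p) (Fin 2 → ZMod p),
        (∀ v ∈ W, (g : Matrix (Fin 2) (Fin 2) (ZMod p)).mulVec v ∈ W) →
        W = ⊥ ∨ W = ⊤) :=
  sl2_order_r_acts_irreducibly_general p r hr hrodd hdvd
end

section
/- Let r, p be odd primes with r | p+1, and let R be a subgroup of order r of SL(2,𝔽_p) acting on V = 𝔽_p². Then 0 is the only fixed point of R in V, i.e., if gv = v for all g ∈ R then v = 0. -/
open Matrix

/-- for odd primes `r ∣ p + 1` and a subgroup `R` of order `r`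
of `SL(2,𝔽_p)`, the only fixed point of `R` on `𝔽_p²` is `0`. -/
theorem sl2_order_r_subgroup_fixed_point (p r : ℕ) [Fact p.Prime]
    (hr : r.Prime) (hpodd : Odd p) (hrodd : Odd r) (hdvd : r ∣ p + 1)
    (R : Subgroup (Matrix.SpecialLinearGroup (Fin 2) (ZMod p)))
    (hR : Nat.card R = r) :
    ∀ v : Fin 2 → ZMod p,
      (∀ g ∈ R, (g : Matrix (Fin 2) (Fin 2) (ZMod p)).mulVec v = v) → v = 0 := by
  intro v hv
  by_contra hv0
  -- get a nontrivial element of R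
  have hfin : Finite R := Nat.finite_of_card_ne_zero (by rw [hR]; exact hr.pos.ne')
  have hnt : Nontrivial R := Finite.one_lt_card_iff_nontrivial.mp (by rw [hR]; exact hr.one_lt)
  obtain ⟨g, hg⟩ := exists_ne (1 : R)
  set A : Matrix (Fin 2) (Fin 2) (ZMod p) := ((g : SpecialLinearGroup (Fin 2) (ZMod p)) : Matrix (Fin 2) (Fin 2) (ZMod p)) with hAdef
  have hdetA : A.det = 1 := (g : SpecialLinearGroup (Fin 2) (ZMod p)).2
  have hA : A.mulVec v = v := hv g g.2
  set N : Matrix (Fin 2) (Fin 2) (ZMod p) := A - 1 with hN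
  have hNv : N.mulVec v = 0 := by
    rw [hN, sub_mulVec, hA, one_mulVec, sub_self]
  have hdetN : N.det = 0 := by
    rw [← Matrix.exists_mulVec_eq_zero_iff]
    exact ⟨v, hv0, hNv⟩
  -- trace A = 2
  have htr : A 0 0 + A 1 1 = 2 := by
    have h1 : N.det = A.det - (A 0 0 + A 1 1) + 1 := by
      rw [hN, Matrix.det_fin_two, Matrix.det_fin_two]
      simp [Matrix.sub_apply, Matrix.one_apply]
      ring
    rw [hdetN, hdetA] at h1
    linear_combination h1
  -- N^2 = 0
  have hN2 : N * N = 0 := by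
    have hd : N.det = 0 := hdetN
    rw [Matrix.det_fin_two] at hd
    have ht : N 0 0 + N 1 1 = 0 := by
      rw [hN]; simp [Matrix.sub_apply, Matrix.one_apply]
      linear_combination htr
    ext i j
    fin_cases i <;> fin_cases j <;>
      simp only [Matrix.mul_apply, Fin.sum_univ_two, Matrix.zero_apply, Fin.mk_zero, Fin.mk_one, Fin.isValue]
    · linear_combination -hd + (N 0 0) * ht
    · linear_combination (N 0 1) * ht
    · linear_combination (N 1 0) * ht
    · linear_combination -hd + (N 1 1) * ht
  -- A^n = 1 + n • N
  have hpow : ∀ n : ℕ, A ^ n = 1 + (n : ZMod p) • N := by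
    intro n
    induction n with
    | zero => simp
    | succ n ih =>
      have hA1 : A = 1 + N := by rw [hN]; abel
      rw [pow_succ, ih, hA1]
      have hmul : (1 + (n : ZMod p) • N) * (1 + N) = 1 + ((n : ZMod p) + 1) • N := by
        simp only [mul_add, add_mul, one_mul, mul_one, smul_mul_assoc, hN2,
          smul_zero, add_zero, add_smul, one_smul]
        abel
      rw [hmul]
      norm_cast
  -- g^r = 1
  have hgr : g ^ r = 1 := by rw [← hR]; exact pow_card_eq_one'
  have hAr : A ^ r = 1 := by
    rw [hAdef, ← Matrix.SpecialLinearGroup.coe_pow]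
    have : ((g : SpecialLinearGroup (Fin 2) (ZMod p)) ^ r) = 1 := by
      rw [← Subgroup.coe_pow, hgr, Subgroup.coe_one]
    rw [this, Matrix.SpecialLinearGroup.coe_one]
  have hrN : (r : ZMod p) • N = 0 := by
    have := hpow r
    rw [hAr] at this
    have h := this.symm
    rwa [← sub_eq_zero, add_sub_cancel_left] at h
  have hrne : (r : ZMod p) ≠ 0 := by
    intro h
    have hpr : p ∣ r := (ZMod.natCast_eq_zero_iff r p).mp h
    have hpr' : p = r := (Nat.prime_dvd_prime_iff_eq Fact.out hr).mp hpr
    subst hpr'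
    have h1 : p ∣ 1 := (Nat.dvd_add_right (dvd_refl p)).mp hdvd
    have h2 := Nat.le_of_dvd one_pos h1
    have h3 := (Fact.out : p.Prime).two_le
    omega
  have hNzero : N = 0 := by
    have := smul_eq_zero.mp hrN
    tauto
  have hA1 : A = 1 := by
    have h := hNzero
    rw [hN, sub_eq_zero] at h
    exact h
  exact hg (Subtype.ext (Subtype.ext hA1))
end
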